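/- arXiv:2502.13653 — 3 statements merged into one kernel-verified Lean document; each statement's English description precedes it below -/
import Mathlib

section
/- Let T be a spanning tree of a finite point set P in a range space (X, R). Then there exists a Hamiltonian path Π on P such that for every range q ∈ R, the number of edges of Π stabbed by q is at most twice the number of edges of T stabbed by q. -/
open scoped Classical

/-- An edge (unordered pair) is stabbed by a range `q` if exactly one of its
endpoints lies in `q`. -/
def EdgeStabbed {V : Type*} (q : Set V) (e : Sym2 V) : Prop :=
  ∃ a b, e = s(a, b) ∧ a ∈ q ∧ b ∉ q

/-- The stabbing number `σ(G, q)`: the number of edges of the graph `G`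
having exactly one endpoint in the range `q`. -/
noncomputable def graphStab {V : Type*} [Fintype V] (G : SimpleGraph V) (q : Set V) : ℕ :=
  (Finset.univ.filter fun e : Sym2 V => e ∈ G.edgeSet ∧ EdgeStabbed q e).card

/-- The stabbing number of a path given as a list of vertices: the number of
consecutive pairs with exactly one element in `q`. -/
noncomputable def pathStab {V : Type*} (p : List V) (q : Set V) : ℕ :=
  (p.zip p.tail).countP fun ab =>
    decide ((ab.1 ∈ q ∧ ab.2 ∉ q) ∨ (ab.1 ∉ q ∧ ab.2 ∈ q))

/-! Both stabbing numbers are lengths for the cut pseudometric of `q` (distance `1` across `q`,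
`0` otherwise), so it suffices to find one ordering of the vertices that is at most twice as
long as the tree for every pseudometric at once. Induct on the tree: remove a leaf `v` with
neighbour `u`, order the smaller tree, and insert `v` right after `u`; by the triangle inequality
this costs at most `2 w(uv)`, twice the weight of the removed edge. -/

section PathLength

variable {V W M : Type*}

section Monoid

variable [AddCommMonoid M]

def pathLength (w : Sym2 V → M) : List V → M
  | a :: b :: l => w s(a, b) + pathLength w (b :: l)
  | _ => 0

theorem pathLength_eq_zero_of_length_le_one (w : Sym2 V → M) :
    ∀ {l : List V}, l.length ≤ 1 → pathLength w l = 0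
  | [], _ | [_], _ => rfl

theorem pathLength_map (w : Sym2 W → M) (f : V → W) :
    ∀ l : List V, pathLength w (l.map f) = pathLength (w ∘ Sym2.map f) l
  | [] | [_] => rfl
  | a :: b :: l => by
    simp only [List.map_cons, pathLength, ← pathLength_map w f (b :: l), Function.comp_apply,
      Sym2.map_mk]

end Monoid

variable [AddCommMonoid M] [PartialOrder M] [IsOrderedAddMonoid M] {w : Sym2 V → M}

/-- Inserting `v` after `u` trades the step `u → b` for `u → v → b`, and
`w s(v, b) ≤ w s(u, v) + w s(u, b)`. -/
theorem pathLength_insert_le (hw₀ : ∀ e, 0 ≤ w e)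
    (hw : ∀ x y z, w s(x, z) ≤ w s(x, y) + w s(y, z)) (u v : V) (l₂ : List V) :
    ∀ l₁ : List V,
      pathLength w (l₁ ++ u :: v :: l₂) ≤ pathLength w (l₁ ++ u :: l₂) + 2 • w s(u, v)
  | [] => by
    cases l₂ with
    | nil =>
      simpa [pathLength, two_nsmul] using le_add_of_nonneg_right (hw₀ s(u, v))
    | cons b l₂ =>
      have hvb : w s(v, b) ≤ w s(u, v) + w s(u, b) := by
        simpa only [Sym2.eq_swap (a := v)] using hw v u b
      calc w s(u, v) + (w s(v, b) + pathLength w (b :: l₂))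
          ≤ w s(u, v) + (w s(u, v) + w s(u, b) + pathLength w (b :: l₂)) := by gcongr
        _ = w s(u, b) + pathLength w (b :: l₂) + 2 • w s(u, v) := by
          rw [two_nsmul]; abel
  | [a] => by
    simpa only [List.singleton_append, List.nil_append, pathLength, add_assoc] using
      add_le_add (le_refl (w s(a, u))) (pathLength_insert_le hw₀ hw u v l₂ [])
  | a :: b :: l₁ => by
    simpa only [List.cons_append, pathLength, add_assoc] using
      add_le_add (le_refl (w s(a, b))) (pathLength_insert_le hw₀ hw u v l₂ (b :: l₁))

end PathLength

theorem List.exists_perm_insert_after {α : Type*} {u : α} {l : List α} (hu : u ∈ l) (v : α) :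
    ∃ l₁ l₂, l = l₁ ++ u :: l₂ ∧ (l₁ ++ u :: v :: l₂).Perm (v :: l) := by
  obtain ⟨l₁, l₂, rfl⟩ := List.append_of_mem hu
  refine ⟨l₁, l₂, rfl, ?_⟩
  simpa using List.perm_middle (a := v) (l₁ := l₁ ++ [u]) (l₂ := l₂)

theorem SimpleGraph.sum_edgeFinset_eq_sum_induce_compl_add {V M : Type*} [Fintype V]
    [AddCommMonoid M] {T : SimpleGraph V} {u v : V}
    (huv : T.Adj u v) (hleaf : ∀ y, T.Adj v y → y = u) (w : Sym2 V → M) :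
    ∑ e ∈ T.edgeFinset, w e =
      ∑ e ∈ (T.induce {v}ᶜ).edgeFinset, w (e.map Subtype.val) + w s(u, v) := by
  have hedges : T.edgeFinset.erase s(u, v) =
      (T.induce {v}ᶜ).edgeFinset.map (Function.Embedding.subtype _).sym2Map := by
    rw [SimpleGraph.map_edgeFinset_induce]
    ext e
    induction e using Sym2.ind with
    | _ a b =>
      simp only [Finset.mem_erase, Finset.mem_inter, SimpleGraph.mem_edgeFinset,
        SimpleGraph.mem_edgeSet, Finset.mk_mem_sym2_iff, Set.mem_toFinset,
        Set.mem_compl_singleton_iff]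
      constructor
      · rintro ⟨hne, hab⟩
        refine ⟨hab, fun ha => hne ?_, fun hb => hne ?_⟩
        · subst ha; rw [hleaf b hab, Sym2.eq_swap]
        · subst hb; rw [hleaf a hab.symm]
      · rintro ⟨hab, ha, hb⟩
        refine ⟨fun h => ?_, hab⟩
        rcases Sym2.mem_iff.1 (h ▸ Sym2.mem_mk_right u v : v ∈ s(a, b)) with rfl | rfl
        exacts [ha rfl, hb rfl]
  rw [← Finset.sum_erase_add _ _ (T.mem_edgeFinset.2 (T.mem_edgeSet.2 huv)), hedges,
    Finset.sum_map]
  rfl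

theorem SimpleGraph.IsTree.exists_nodup_pathLength_le {V : Type*} [Fintype V]
    {T : SimpleGraph V} (hT : T.IsTree)
    (M : Type*) [AddCommMonoid M] [PartialOrder M] [IsOrderedAddMonoid M] :
    ∃ p : List V, p.Nodup ∧ (∀ v, v ∈ p) ∧
      ∀ w : Sym2 V → M, (∀ e, 0 ≤ w e) →
        (∀ x y z, w s(x, z) ≤ w s(x, y) + w s(y, z)) →
        pathLength w p ≤ 2 • ∑ e ∈ T.edgeFinset, w e := by
  refine Fintype.induction_subsingleton_or_nontrivial
    (P := fun V _ => ∀ T : SimpleGraph V, T.IsTree →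
      ∃ p : List V, p.Nodup ∧ (∀ v, v ∈ p) ∧
        ∀ w : Sym2 V → M, (∀ e, 0 ≤ w e) →
          (∀ x y z, w s(x, z) ≤ w s(x, y) + w s(y, z)) →
          pathLength w p ≤ 2 • ∑ e ∈ T.edgeFinset, w e)
    V ?_ ?_ T hT
  · intro V _ _ T _
    refine ⟨Finset.univ.toList, Finset.nodup_toList _, by simp, fun w hw₀ _ => ?_⟩
    rw [pathLength_eq_zero_of_length_le_one w
      (by simpa using Fintype.card_le_one_iff_subsingleton.2 ‹_›)]
    exact nsmul_nonneg (Finset.sum_nonneg fun e _ => hw₀ e) 2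
  · intro V _ _ ih T hT
    obtain ⟨v, hv⟩ := hT.exists_vert_degree_one_of_nontrivial
    obtain ⟨u, hvu, hleaf⟩ := SimpleGraph.degree_eq_one_iff_existsUnique_adj.1 hv
    have hT' : (T.induce {v}ᶜ).IsTree :=
      ⟨hT.connected.induce_compl_singleton_of_degree_eq_one hv, hT.isAcyclic.induce _⟩
    obtain ⟨p', hnodup', hmem', hp'⟩ :=
      ih _ (Fintype.card_subtype_lt (p := (· ∈ ({v}ᶜ : Set V))) (x := v) (by simp)) _ hT'
    have hu : u ∈ p'.map Subtype.val := List.mem_map_of_mem (hmem' ⟨u, hvu.ne'⟩)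
    obtain ⟨l₁, l₂, hsplit, hperm⟩ := List.exists_perm_insert_after hu v
    refine ⟨l₁ ++ u :: v :: l₂, hperm.nodup_iff.2 ?_, fun x => hperm.mem_iff.2 ?_,
      fun w hw₀ hw => ?_⟩
    · exact List.nodup_cons.2 ⟨by simp, hnodup'.map Subtype.val_injective⟩
    · rcases eq_or_ne x v with rfl | hx
      exacts [List.mem_cons_self, List.mem_cons_of_mem _ (List.mem_map_of_mem (hmem' ⟨x, hx⟩))]
    calc pathLength w (l₁ ++ u :: v :: l₂)
        ≤ pathLength w (l₁ ++ u :: l₂) + 2 • w s(u, v) :=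
          pathLength_insert_le hw₀ hw u v l₂ l₁
      _ = pathLength (w ∘ Sym2.map Subtype.val) p' + 2 • w s(u, v) := by
        rw [← pathLength_map, hsplit]
      _ ≤ 2 • ∑ e ∈ (T.induce {v}ᶜ).edgeFinset, w (e.map (↑)) + 2 • w s(u, v) :=
          add_le_add (hp' _ (fun _ => hw₀ _) (fun x y z => hw x y z)) le_rfl
      _ = 2 • ∑ e ∈ T.edgeFinset, w e := by
        rw [T.sum_edgeFinset_eq_sum_induce_compl_add hvu.symm hleaf, nsmul_add]

section Stabbing

variable {V : Type*}

noncomputable def cutWeight (q : Set V) (e : Sym2 V) : ℕ :=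
  if EdgeStabbed q e then 1 else 0

theorem edgeStabbed_mk_iff {q : Set V} {a b : V} :
    EdgeStabbed q s(a, b) ↔ ¬(a ∈ q ↔ b ∈ q) := by
  constructor
  · rintro ⟨x, y, he, hx, hy⟩
    rcases Sym2.eq_iff.1 he with ⟨rfl, rfl⟩ | ⟨rfl, rfl⟩ <;> tauto
  · intro h
    by_cases ha : a ∈ q
    · exact ⟨a, b, rfl, ha, fun hb => h ⟨fun _ => hb, fun _ => ha⟩⟩
    · exact ⟨b, a, Sym2.eq_swap, by tauto, ha⟩

theorem cutWeight_triangle (q : Set V) (x y z : V) :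
    cutWeight q s(x, z) ≤ cutWeight q s(x, y) + cutWeight q s(y, z) := by
  simp only [cutWeight, edgeStabbed_mk_iff]
  by_cases hx : x ∈ q <;> by_cases hy : y ∈ q <;> by_cases hz : z ∈ q <;> simp [hx, hy, hz]

theorem pathStab_eq_pathLength (q : Set V) :
    ∀ p : List V, pathStab p q = pathLength (cutWeight q) p
  | [] | [_] => rfl
  | a :: b :: l => by
    rw [pathLength, ← pathStab_eq_pathLength q (b :: l)]
    simp only [pathStab, List.tail_cons, List.zip_cons_cons, List.countP_cons, cutWeight,
      edgeStabbed_mk_iff]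
    by_cases ha : a ∈ q <;> by_cases hb : b ∈ q <;> simp [ha, hb, add_comm]

theorem graphStab_eq_sum_cutWeight [Fintype V] (G : SimpleGraph V) (q : Set V) :
    graphStab G q = ∑ e ∈ G.edgeFinset, cutWeight q e := by
  rw [graphStab, ← Finset.filter_filter, Finset.card_filter]
  congr 1
  ext e
  simp

end Stabbing

/-- for every spanning tree `T` of a finite point set there is a
Hamiltonian path `Π` (a duplicate-free list of all the points) such that for
every range `q ∈ R`, `σ(Π, q) ≤ 2·σ(T, q)`. -/
theorem stmt3 {V : Type*} [Fintype V] (R : Set (Set V))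
    (T : SimpleGraph V) (hT : T.IsTree) :
    ∃ p : List V, p.Nodup ∧ (∀ v : V, v ∈ p) ∧
      ∀ q ∈ R, pathStab p q ≤ 2 * graphStab T q := by
  obtain ⟨p, hnodup, hmem, hp⟩ := hT.exists_nodup_pathLength_le ℕ
  refine ⟨p, hnodup, hmem, fun q _ => ?_⟩
  rw [pathStab_eq_pathLength, graphStab_eq_sum_cutWeight, ← smul_eq_mul]
  exact hp _ (fun _ => Nat.zero_le _) (cutWeight_triangle q)
end

section
/- Let T be a partition tree on a finite point set P in a range space (X, R) whose leaves each contain a single point. Then there exists a Hamiltonian path Π on P such that for every range q ∈ R, σ(Π, q) ≤ ζ(T, q). -/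
open scoped Classical

/-- A partition tree: each node carries the subset of points associated with it
and a (possibly empty) family of children. -/
inductive PTree (V : Type u) : Type u
  | node : Finset V → (k : ℕ) → (Fin k → PTree V) → PTree V

namespace PTree

/-- The point set associated with the root of a partition tree. -/
def pts {V : Type u} : PTree V → Finset V
  | .node s _ _ => s

/-- A range `q` stabs a set `s` if `q ∩ s ≠ ∅` and `q ∩ s ≠ s`. -/
def Stabs {V : Type u} (q : Set V) (s : Set V) : Prop :=
  (q ∩ s).Nonempty ∧ ¬ s ⊆ q

/-- Validity of a partition tree: the children of each internal node are
pairwise disjoint and their point sets partition the node's point set. -/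
def valid {V : Type u} [DecidableEq V] : PTree V → Prop
  | .node s k c =>
      (k ≠ 0 → s = Finset.univ.biUnion fun i : Fin k => (c i).pts) ∧
      (∀ i j : Fin k, i ≠ j → Disjoint (c i).pts (c j).pts) ∧
      ∀ i : Fin k, (c i).valid

/-- A binary partition tree: every node has at most two children. -/
def binary {V : Type u} : PTree V → Prop
  | .node _ k c => k ≤ 2 ∧ ∀ i : Fin k, (c i).binary

/-- Number of non-root nodes whose parent's point set is stabbed by `q`. -/
noncomputable def zetaAux {V : Type u} (q : Set V) : PTree V → ℕ
  | .node s k c =>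
      (if Stabs q (↑s : Set V) then k else 0) + ∑ i : Fin k, (c i).zetaAux q

/-- The visiting number `ζ(T, q)`: the number of nodes that are either the root
or whose parent's point set is stabbed by `q`. -/
noncomputable def zeta {V : Type u} (q : Set V) (T : PTree V) : ℕ :=
  1 + T.zetaAux q

end PTree

/-- Predicate: every leaf of the partition tree holds exactly one point. -/
def PTree.leavesSingle {V : Type u} : PTree V → Prop
  | .node s k c => (k = 0 → s.card = 1) ∧ ∀ i : Fin k, (c i).leavesSingle

/-!
Read the leaves of `T` from left to right. The leaves below a node form a contiguous segment of
this path, and if `q` does not stab the node, no edge inside the segment is stabbed. A stabbed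
node is internal, since leaves are single points, and its segment is the concatenation of the
segments of its `k` children: the `k - 1` junction edges are paid for by the `k` children that
`ζ(T, q)` counts, and the edges inside each child's segment by induction.
-/

section PathStab

variable {V : Type*}

lemma pathStab_cons_cons (a b : V) (l : List V) (q : Set V) :
    pathStab (a :: b :: l) q =
      (if (a ∈ q ∧ b ∉ q) ∨ (a ∉ q ∧ b ∈ q) then 1 else 0) + pathStab (b :: l) q := by
  simp only [pathStab, List.tail_cons, List.zip_cons_cons, List.countP_cons]
  split_ifs <;> simp_all [Nat.add_comm]

lemma pathStab_append_le (l₁ l₂ : List V) (q : Set V) :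
    pathStab (l₁ ++ l₂) q ≤ pathStab l₁ q + pathStab l₂ q + 1 := by
  induction l₁ with
  | nil => simp [pathStab]
  | cons a t ih =>
    cases t with
    | nil =>
      cases l₂ with
      | nil => exact Nat.zero_le _
      | cons b l =>
        rw [List.singleton_append, pathStab_cons_cons, show pathStab [a] q = 0 from rfl]
        split_ifs <;> omega
    | cons b t =>
      rw [List.cons_append, List.cons_append, pathStab_cons_cons, ← List.cons_append,
        pathStab_cons_cons]
      split_ifs <;> omega

lemma pathStab_flatten_le (L : List (List V)) (q : Set V) :
    pathStab L.flatten q ≤ (L.map (pathStab · q)).sum + L.length := by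
  induction L with
  | nil => exact Nat.zero_le _
  | cons l L ih =>
    rw [List.flatten_cons, List.map_cons, List.sum_cons, List.length_cons]
    have := pathStab_append_le l L.flatten q
    omega

lemma pathStab_eq_zero_of_forall_mem_iff {l : List V} {q : Set V}
    (h : ∀ x ∈ l, ∀ y ∈ l, x ∈ q ↔ y ∈ q) : pathStab l q = 0 := by
  rw [pathStab, List.countP_eq_zero]
  intro ab hab
  obtain ⟨h₁, h₂⟩ := List.of_mem_zip hab
  have := h ab.1 h₁ ab.2 (List.mem_of_mem_tail h₂)
  simp only [decide_eq_true_eq]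
  tauto

end PathStab

namespace PTree

variable {V : Type*}

lemma not_stabs_iff {q s : Set V} : ¬ Stabs q s ↔ ∀ x ∈ s, ∀ y ∈ s, x ∈ q ↔ y ∈ q := by
  simp only [Stabs, Set.Nonempty, Set.not_subset, not_and, not_exists]
  constructor
  · intro h x hx y hy
    exact ⟨fun hxq => by_contra fun hyq => h ⟨x, hxq, hx⟩ y hy hyq,
      fun hyq => by_contra fun hxq => h ⟨y, hyq, hy⟩ x hx hxq⟩
  · rintro h ⟨x, hxq, hx⟩ y hy hyq
    exact hyq ((h x hx y hy).mp hxq)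

noncomputable def leaves : PTree V → List V
  | .node s 0 _ => s.toList
  | .node _ (_ + 1) c => (List.ofFn fun i => (c i).leaves).flatten

@[simp] lemma leaves_node_zero (s : Finset V) (c : Fin 0 → PTree V) :
    (node s 0 c).leaves = s.toList := rfl

@[simp] lemma leaves_node_succ (s : Finset V) (k : ℕ) (c : Fin (k + 1) → PTree V) :
    (node s (k + 1) c).leaves = (List.ofFn fun i => (c i).leaves).flatten := rfl

variable [DecidableEq V]

lemma mem_leaves {T : PTree V} (hv : T.valid) {x : V} : x ∈ T.leaves ↔ x ∈ T.pts := by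
  induction T with
  | node s k c ih =>
    cases k with
    | zero => simp [pts]
    | succ k =>
      obtain ⟨hs, -, hvc⟩ := hv
      simp only [leaves_node_succ, List.mem_flatten, List.mem_ofFn, pts, hs k.succ_ne_zero,
        Finset.mem_biUnion, Finset.mem_univ, true_and]
      constructor
      · rintro ⟨_, ⟨i, rfl⟩, hx⟩
        exact ⟨i, (ih i (hvc i)).mp hx⟩
      · rintro ⟨i, hx⟩
        exact ⟨_, ⟨i, rfl⟩, (ih i (hvc i)).mpr hx⟩

lemma nodup_leaves {T : PTree V} (hv : T.valid) : T.leaves.Nodup := by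
  induction T with
  | node s k c ih =>
    cases k with
    | zero => exact Finset.nodup_toList s
    | succ k =>
      obtain ⟨-, hdisj, hvc⟩ := hv
      rw [leaves_node_succ, List.nodup_flatten, List.forall_mem_ofFn_iff, List.pairwise_ofFn]
      refine ⟨fun i => ih i (hvc i), fun i j hij x hxi hxj => ?_⟩
      exact Finset.disjoint_left.mp (hdisj i j hij.ne) ((mem_leaves (hvc i)).mp hxi)
        ((mem_leaves (hvc j)).mp hxj)

lemma pathStab_leaves_eq_zero {T : PTree V} (hv : T.valid) {q : Set V}
    (hq : ¬ Stabs q T.pts) : pathStab T.leaves q = 0 :=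
  pathStab_eq_zero_of_forall_mem_iff fun x hx y hy =>
    not_stabs_iff.mp hq x ((mem_leaves hv).mp hx) y ((mem_leaves hv).mp hy)

lemma pathStab_leaves_le_zetaAux {T : PTree V} (hv : T.valid) (hl : T.leavesSingle)
    (q : Set V) : pathStab T.leaves q ≤ T.zetaAux q := by
  induction T with
  | node s k c ih =>
    by_cases hq : Stabs q s
    swap
    · exact (pathStab_leaves_eq_zero hv hq).trans_le (Nat.zero_le _)
    cases k with
    | zero =>
      obtain ⟨a, rfl⟩ := Finset.card_eq_one.mp (hl.1 rfl)
      exact absurd hq (not_stabs_iff.mpr (by simp))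
    | succ k =>
      obtain ⟨-, -, hvc⟩ := hv
      calc pathStab (node s (k + 1) c).leaves q
          ≤ ∑ i, pathStab (c i).leaves q + (k + 1) := by
            simpa only [leaves_node_succ, List.map_ofFn, List.sum_ofFn, List.length_ofFn,
              Function.comp_apply] using
              pathStab_flatten_le (List.ofFn fun i => (c i).leaves) q
        _ ≤ ∑ i, (c i).zetaAux q + (k + 1) := by
            gcongr with i
            exact ih i (hvc i) (hl.2 i)
        _ = (node s (k + 1) c).zetaAux q := by
            rw [zetaAux, if_pos hq, add_comm]

end PTree

/-- for every partition tree `T` on `P` whose leaves are single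
points, there is a Hamiltonian path `Π` with `σ(Π, q) ≤ ζ(T, q)` for all
ranges `q ∈ R`. -/
theorem stmt5 {V : Type*} [Fintype V] [DecidableEq V] (R : Set (Set V))
    (T : PTree V) (hv : T.valid) (hroot : T.pts = Finset.univ)
    (hleaves : T.leavesSingle) :
    ∃ p : List V, p.Nodup ∧ (∀ v : V, v ∈ p) ∧
      ∀ q ∈ R, pathStab p q ≤ T.zeta q := by
  refine ⟨T.leaves, PTree.nodup_leaves hv, fun v => ?_, fun q _ => ?_⟩
  · simp [PTree.mem_leaves hv, hroot]
  · exact (PTree.pathStab_leaves_le_zetaAux hv hleaves q).trans (Nat.le_add_left _ _)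
end

section
/- If the query distribution D_q is (α, r)-sparse in ℝ^d, and every ring separator used in a ring tree of height h = O(c log n) on an n-point set P has query mass at most O(α^{Θ(1/d)}) + O(1/n) (probability that a random query lands in the separator ring), and the tree is balanced with both children of each node containing at least a 1/(c+1) fraction of the node's points (c the doubling constant of ℝ^d), then the expected query time of the fixed-radius-ball search on the ring tree is O(n·α^{Θ(1/d)}·c·log n), and the tree requires O(d·n) space. -/
open scoped Classical
open MeasureTheory

/-- A ring tree: internal nodes carry a ring separator (center, inner radius),
leaves carry the stored points. -/
inductive RTree (E : Type u) : Type u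
  | leaf : Finset E → RTree E
  | node : E → ℝ → RTree E → RTree E → RTree E

namespace RTree

variable {E : Type u}

/-- The set of points stored in (the leaves of) a ring tree. -/
def pts [DecidableEq E] : RTree E → Finset E
  | .leaf s => s
  | .node _ _ l r => l.pts ∪ r.pts

/-- Total number of nodes of the tree. -/
def numNodes : RTree E → ℕ
  | .leaf _ => 1
  | .node _ _ l r => 1 + l.numNodes + r.numNodes

/-- The query cost of the fixed-radius-ball search with search radius `rr`:
one unit per visited internal node, the query descends to the inner child when
`dist q o < r_s`, to the outer child when `dist q o > r_s + 2rr`, and to both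
children otherwise; at a leaf all stored points are scanned. -/
noncomputable def cost [DecidableEq E] [PseudoMetricSpace E] (rr : ℝ) (q : E) :
    RTree E → ℕ
  | .leaf s => s.card
  | .node o rs l r =>
      1 + (if dist q o < rs then l.cost rr q
           else if rs + 2 * rr < dist q o then r.cost rr q
           else l.cost rr q + r.cost rr q)

/-- Structural validity of a ring tree: leaves are nonempty and hold at most
`L` points, the two children of every node are disjoint, their points lie on
the correct side of the middle sphere of the ring separator, and each child
holds at least a `1/(c+1)` fraction of the node's points. -/
def valid [DecidableEq E] [PseudoMetricSpace E] (c L : ℕ) (rr : ℝ) :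
    RTree E → Prop
  | .leaf s => s.Nonempty ∧ s.card ≤ L
  | .node o rs l r =>
      Disjoint l.pts r.pts ∧
      (∀ x ∈ l.pts, dist x o < rs + rr) ∧
      (∀ x ∈ r.pts, rs + rr ≤ dist x o) ∧
      (((l.pts ∪ r.pts).card : ℝ) / (c + 1) ≤ (l.pts.card : ℝ)) ∧
      (((l.pts ∪ r.pts).card : ℝ) / (c + 1) ≤ (r.pts.card : ℝ)) ∧
      l.valid c L rr ∧ r.valid c L rr

/-- Every ring separator in the tree has query mass at most `β` under the
query distribution `D`. -/
def sepBound [PseudoMetricSpace E] [MeasurableSpace E] (D : Measure E)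
    (rr β : ℝ) : RTree E → Prop
  | .leaf _ => True
  | .node o rs l r =>
      (D {q | rs ≤ dist q o ∧ dist q o ≤ rs + 2 * rr}).toReal ≤ β ∧
      l.sepBound D rr β ∧ r.sepBound D rr β

end RTree

/-! The search for a query `q` branches only at the nodes whose separator ring contains `q`;
between two such branchings it follows a single root-to-leaf path, so it visits at most
`(b + 1)(h + 1)` nodes, `b` the number of these bad nodes and `h` the height, and scans
at most `L` points per leaf. Integrating, `E[b]` is the sum of the ring masses, at most
`N·(α^{γ/d} + κ/n)` for `N` the number of nodes. Disjoint children and nonempty leaves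
give `N < 2n`, and since each child keeps at least a `1/(c+1)` fraction of the points,
the other child keeps at most a `c/(c+1)` fraction, so `h ≤ (c + 1) log n`. -/

namespace RTree

variable {E : Type*}

def height : RTree E → ℕ
  | .leaf _ => 0
  | .node _ _ l r => max l.height r.height + 1

section Ring

variable [PseudoMetricSpace E]

def ring (o : E) (rs rr : ℝ) : Set E :=
  {q | rs ≤ dist q o ∧ dist q o ≤ rs + 2 * rr}

/-- Counts the nodes at which the search for `q` descends into both children. -/
noncomputable def badCount (rr : ℝ) (q : E) : RTree E → ℝ
  | .leaf _ => 0
  | .node o rs l r => (ring o rs rr).indicator 1 q + l.badCount rr q + r.badCount rr q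

theorem badCount_nonneg (rr : ℝ) (q : E) : ∀ T : RTree E, 0 ≤ T.badCount rr q
  | .leaf _ => le_rfl
  | .node o rs l r => by
    have := badCount_nonneg rr q l
    have := badCount_nonneg rr q r
    have : (0 : ℝ) ≤ (ring o rs rr).indicator 1 q :=
      Set.indicator_nonneg (fun _ _ ↦ zero_le_one) q
    simp only [badCount]
    linarith

end Ring

section Structure

variable [DecidableEq E] [PseudoMetricSpace E] {c L : ℕ} {rr : ℝ}

theorem numNodes_add_one_le_two_mul_card :
    ∀ T : RTree E, T.valid c L rr → T.numNodes + 1 ≤ 2 * T.pts.card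
  | .leaf s, ⟨hs, _⟩ => by
    have := hs.card_pos
    simp only [numNodes, pts]
    omega
  | .node o rs l r, ⟨hdisj, _, _, _, _, hl, hr⟩ => by
    have := numNodes_add_one_le_two_mul_card l hl
    have := numNodes_add_one_le_two_mul_card r hr
    simp only [numNodes, pts, Finset.card_union_of_disjoint hdisj]
    omega

theorem mul_one_add_inv_le_add {a b c : ℝ} (hb : 0 ≤ b) (hc : 0 ≤ c)
    (h : (a + b) / (c + 1) ≤ b) : a * (1 + c⁻¹) ≤ a + b := by
  rcases hc.eq_or_lt with rfl | hc
  · simpa using hb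
  rw [div_le_iff₀ (by positivity)] at h
  have : a * c⁻¹ ≤ b := by
    rw [← div_eq_mul_inv, div_le_iff₀ hc]
    linarith
  linarith

theorem one_add_inv_pow_height_le_card :
    ∀ T : RTree E, T.valid c L rr → (1 + (c : ℝ)⁻¹) ^ T.height ≤ T.pts.card
  | .leaf s, ⟨hs, _⟩ => by
    simpa [height, pts] using hs.card_pos
  | .node o rs l r, ⟨hdisj, _, _, hbl, hbr, hl, hr⟩ => by
    have hcard : ((l.pts ∪ r.pts).card : ℝ) = l.pts.card + r.pts.card := by
      rw [Finset.card_union_of_disjoint hdisj, Nat.cast_add]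
    rw [hcard] at hbl hbr
    have hlr := mul_one_add_inv_le_add (by positivity) c.cast_nonneg hbr
    have hrl := mul_one_add_inv_le_add (by positivity) c.cast_nonneg
      (add_comm (r.pts.card : ℝ) _ ▸ hbl)
    have hl := one_add_inv_pow_height_le_card l hl
    have hr := one_add_inv_pow_height_le_card r hr
    have hρ : (0 : ℝ) ≤ 1 + (c : ℝ)⁻¹ := by positivity
    simp only [height, pts, hcard, pow_succ]
    rcases le_total l.height r.height with h | h
    · rw [max_eq_right h]
      nlinarith
    · rw [max_eq_left h]
      nlinarith

theorem height_le_mul_log (hc : 0 < c) (T : RTree E) (hT : T.valid c L rr) :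
    (T.height : ℝ) ≤ (c + 1) * Real.log T.pts.card := by
  have hc' : (0 : ℝ) < c := Nat.cast_pos.mpr hc
  have hρ : (0 : ℝ) < 1 + (c : ℝ)⁻¹ := by positivity
  have hlogρ : 1 / ((c : ℝ) + 1) ≤ Real.log (1 + (c : ℝ)⁻¹) := by
    convert Real.one_sub_inv_le_log_of_pos hρ using 1
    field_simp
    ring
  have hpow : T.height * Real.log (1 + (c : ℝ)⁻¹) ≤ Real.log T.pts.card := by
    rw [← Real.log_pow]
    exact Real.log_le_log (pow_pos hρ _) (one_add_inv_pow_height_le_card T hT)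
  rw [div_le_iff₀ (by positivity)] at hlogρ
  nlinarith [(T.height.cast_nonneg : (0 : ℝ) ≤ T.height)]

theorem one_add_le_mul_of_le {x a b h H L : ℝ} (hx : x ≤ (a + 1) * (h + 1) * L) (ha : 0 ≤ a)
    (hab : a ≤ b) (hh : 0 ≤ h) (hhH : h + 1 ≤ H) (hL : 1 ≤ L) :
    1 + x ≤ (b + 1) * (H + 1) * L := by
  have : (a + 1) * (h + 1) * L ≤ (b + 1) * H * L := by gcongr; linarith
  nlinarith

theorem cost_le (hL : 1 ≤ L) (q : E) :
    ∀ T : RTree E, T.valid c L rr →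
      (T.cost rr q : ℝ) ≤ (T.badCount rr q + 1) * (T.height + 1) * L
  | .leaf s, ⟨_, hs⟩ => by
    simpa [cost, badCount, height] using hs
  | .node o rs l r, ⟨_, _, _, _, _, hl, hr⟩ => by
    have hl := cost_le hL q l hl
    have hr := cost_le hL q r hr
    have hbl := badCount_nonneg rr q l
    have hbr := badCount_nonneg rr q r
    have hi : (0 : ℝ) ≤ (ring o rs rr).indicator 1 q :=
      Set.indicator_nonneg (fun _ _ ↦ zero_le_one) q
    have hL' : (1 : ℝ) ≤ L := by exact_mod_cast hL
    have hhl : (l.height : ℝ) + 1 ≤ max (l.height : ℝ) r.height + 1 :=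
      add_le_add_left (le_max_left _ _) 1
    have hhr : (r.height : ℝ) + 1 ≤ max (l.height : ℝ) r.height + 1 :=
      add_le_add_left (le_max_right _ _) 1
    simp only [cost, badCount, height]
    split_ifs with hin hout
    · push_cast
      exact one_add_le_mul_of_le hl hbl (by linarith) (by positivity) hhl hL'
    · push_cast
      exact one_add_le_mul_of_le hr hbr (by linarith) (by positivity) hhr hL'
    · have hq : q ∈ ring o rs rr := ⟨not_lt.mp hin, not_lt.mp hout⟩
      rw [Set.indicator_of_mem hq, Pi.one_apply]
      have hl' := hl.trans <| mul_le_mul_of_nonneg_right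
        (mul_le_mul_of_nonneg_left hhl (by linarith)) (by positivity)
      have hr' := hr.trans <| mul_le_mul_of_nonneg_right
        (mul_le_mul_of_nonneg_left hhr (by linarith)) (by positivity)
      push_cast
      nlinarith

end Structure

section Measure

variable [PseudoMetricSpace E] [MeasurableSpace E] [OpensMeasurableSpace E]

theorem measurableSet_ring (o : E) (rs rr : ℝ) : MeasurableSet (ring o rs rr) := by
  have hd : Measurable fun q : E ↦ dist q o := (continuous_id.dist continuous_const).measurable
  exact (measurableSet_le measurable_const hd).inter (measurableSet_le hd measurable_const)

variable (D : Measure E)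

section Finite

variable [IsFiniteMeasure D]

theorem integrable_indicator_ring (o : E) (rs rr : ℝ) :
    Integrable (fun q ↦ (ring o rs rr).indicator (1 : E → ℝ) q) D :=
  (integrable_const 1).indicator (measurableSet_ring o rs rr)

theorem integrable_badCount (rr : ℝ) :
    ∀ T : RTree E, Integrable (fun q ↦ T.badCount rr q) D
  | .leaf _ => integrable_zero _ _ _
  | .node o rs l r =>
    ((integrable_indicator_ring D o rs rr).add (integrable_badCount rr l)).add
      (integrable_badCount rr r)

theorem integral_badCount_le {rr β : ℝ} (hβ : 0 ≤ β) :
    ∀ T : RTree E, T.sepBound D rr β → ∫ q, T.badCount rr q ∂D ≤ T.numNodes * β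
  | .leaf _, _ => by simp [badCount, numNodes, hβ]
  | .node o rs l r, ⟨hring, hl, hr⟩ => by
    have hl := integral_badCount_le hβ l hl
    have hr := integral_badCount_le hβ r hr
    have hring : ∫ q, (ring o rs rr).indicator 1 q ∂D ≤ β := by
      rwa [integral_indicator_one (measurableSet_ring o rs rr)]
    simp only [badCount, numNodes]
    have hi := integrable_indicator_ring D o rs rr
    have hil : Integrable (fun q ↦ (ring o rs rr).indicator 1 q + l.badCount rr q) D :=
      hi.add (integrable_badCount D rr l)
    rw [integral_add hil (integrable_badCount D rr r),
      integral_add hi (integrable_badCount D rr l)]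
    push_cast
    linarith

end Finite

theorem integral_cost_le [DecidableEq E] [IsProbabilityMeasure D] {c L : ℕ} {rr β : ℝ}
    (hL : 1 ≤ L) (hβ : 0 ≤ β) (T : RTree E) (hT : T.valid c L rr)
    (hsep : T.sepBound D rr β) :
    ∫ q, (T.cost rr q : ℝ) ∂D ≤ (T.numNodes * β + 1) * (T.height + 1) * L := by
  have hbound : Integrable (fun q ↦ (T.badCount rr q + 1) * (T.height + 1) * L) D :=
    (((integrable_badCount D rr T).add (integrable_const 1)).mul_const _).mul_const _
  calc ∫ q, (T.cost rr q : ℝ) ∂D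
      ≤ ∫ q, (T.badCount rr q + 1) * (T.height + 1) * L ∂D :=
        integral_mono_of_nonneg (ae_of_all _ fun q ↦ by positivity) hbound
          (ae_of_all _ fun q ↦ cost_le hL q T hT)
    _ = (∫ q, T.badCount rr q ∂D + 1) * (T.height + 1) * L := by
        rw [integral_mul_const, integral_mul_const,
          integral_add (integrable_badCount D rr T) (integrable_const 1)]
        simp
    _ ≤ (T.numNodes * β + 1) * (T.height + 1) * L := by
        gcongr
        exact integral_badCount_le D hβ T hsep

end Measure

end RTree

/-- for an `(α, r)`-sparse query distribution, a balanced ring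
tree on `n` points whose ring separators all have query mass at most
`α^{Θ(1/d)} + O(1/n)` answers fixed-radius-ball queries in expected time
`O(n·α^{Θ(1/d)}·c·log n)` and has `O(n)` nodes (hence `O(d·n)` space, each
node storing `O(d)` coordinates). -/
theorem stmt19 :
    ∃ K : ℝ, 0 < K ∧
      ∀ (d c L n : ℕ), 2 ≤ c → 1 ≤ L → 2 ≤ n →
      ∀ (D : Measure (EuclideanSpace ℝ (Fin d))) (_ : IsProbabilityMeasure D)
        (α rr γ κ : ℝ), 0 < α → α ≤ 1 → 0 < rr → 0 < γ → 0 ≤ κ →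
        (∀ x : EuclideanSpace ℝ (Fin d),
          (D (Metric.closedBall x rr)).toReal ≤ α) →
      ∀ T : RTree (EuclideanSpace ℝ (Fin d)),
        T.valid c L rr → T.pts.card = n →
        T.sepBound D rr (α ^ (γ / (d : ℝ)) + κ / n) →
        ((∫ q, (T.cost rr q : ℝ) ∂D)
            ≤ K * (1 + κ) * ((n : ℝ) * α ^ (γ / (d : ℝ)) + 1)
              * ((c : ℝ) * Real.log n) * L) ∧
        ((T.numNodes : ℝ) ≤ K * n) := by
  refine ⟨9, by norm_num, ?_⟩
  intro d c L n hc hL hn D _ α rr γ κ hα _ _ _ hκ _ T hT hcard hsep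
  set A := α ^ (γ / (d : ℝ))
  have hA : 0 ≤ A := by positivity
  have hn' : (2 : ℝ) ≤ n := by exact_mod_cast hn
  have hc' : (2 : ℝ) ≤ c := by exact_mod_cast hc
  have hnodes : (T.numNodes : ℝ) ≤ 2 * n := by
    have := hcard ▸ T.numNodes_add_one_le_two_mul_card hT
    have : (T.numNodes : ℝ) + 1 ≤ 2 * n := by exact_mod_cast this
    linarith
  have hheight : (T.height : ℝ) ≤ (c + 1) * Real.log n :=
    hcard ▸ T.height_le_mul_log (by omega) hT
  have hlog : Real.log 2 ≤ Real.log n := Real.log_le_log (by norm_num) hn'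
  have hlog2 := Real.log_two_gt_d9
  have hβ : 0 ≤ A + κ / n := by positivity
  have hbad : (T.numNodes : ℝ) * (A + κ / n) + 1 ≤ 3 * (1 + κ) * (n * A + 1) := by
    have : (T.numNodes : ℝ) * (A + κ / n) ≤ 2 * n * A + 2 * κ := by
      calc (T.numNodes : ℝ) * (A + κ / n) ≤ 2 * n * (A + κ / n) := by gcongr
        _ = 2 * n * A + 2 * κ := by field_simp
    nlinarith [mul_nonneg hκ (mul_nonneg n.cast_nonneg hA)]
  -- `(c + 1) log n ≤ (3/2) c log n` and `1 < 2 log 2 ≤ c log n`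
  have hlevels : (T.height : ℝ) + 1 ≤ 3 * (c * Real.log n) := by nlinarith
  refine ⟨(RTree.integral_cost_le D hL hβ T hT hsep).trans ?_, by linarith⟩
  calc _ ≤ 3 * (1 + κ) * (n * A + 1) * (3 * (c * Real.log n)) * L := by gcongr
    _ = 9 * (1 + κ) * (n * A + 1) * (c * Real.log n) * L := by ring
end
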